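/- Let ν be a Borel measure on ℝ which is absolutely continuous with respect to Lebesgue measure with a density u satisfying u(x) ≤ C for all x ∈ ℝ, where C < ∞. Define u_1 := u and, inductively, u_{k+1}(x) := ∫_ℝ u(y) u_k(x − y) dy. Then for every integer k ≥ 1 the function u_k is a density of the k-fold convolution power ν^{∗k}, and it satisfies, for every x ∈ ℝ (with values in [0,∞]), u_k(x) ≤ k C ν^{∗(k−1)}(( min{0,x}, ∞)), where for k = 1 the right-hand side is interpreted with the convention ν^{∗0}-factor equal to 1, i.e. u_1(x) ≤ C. -/

import Mathlib

open MeasureTheory Set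
open scoped ENNReal

/-- The `k`-fold convolution power of a measure on `ℝ` (with `ν^{*0} = δ_0`). -/
noncomputable def convPow (ν : Measure ℝ) : ℕ → Measure ℝ
  | 0 => Measure.dirac 0
  | k + 1 => (convPow ν k).conv ν

/-- The iterated convolution densities: `iterDens u k` is `u_{k+1}`, where `u_1 = u` and
`u_{k+1}(x) = ∫ u(y) u_k(x - y) dy`. -/
noncomputable def iterDens (u : ℝ → ℝ≥0∞) : ℕ → ℝ → ℝ≥0∞
  | 0 => u
  | k + 1 => fun x => ∫⁻ y : ℝ, u y * iterDens u k (x - y)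

/-!
Write `ρ = volume.withDensity u` and `μ_k = ρ^{∗k}`. For any s-finite `μ`, the convolution
`μ ∗ ρ` has density `x ↦ ∫ u(x - t) dμ(t)`; this identifies `u_{k+1}` as the density of
`μ_{k+1}` and gives `u_{k+1}(x) = ∫ u(x - t) dμ_k(t)`. Split this integral at `t = 0`. The part
`t ≥ 0` is at most `C μ_k([0, ∞))`. For the part `t < 0`, induction on `k` gives
`∫_{t<0} u(w - t) dμ_k(t) ≤ k C μ_k((w, ∞))`: when `y ∼ ρ` and `t ∼ μ_k`, `y + t < 0` forces
`y < 0` or `t < 0`. In the first case the bound `ρ ≤ C · Lebesgue` and the reflection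
`t ↦ w - t`, which maps `(-∞, 0)` onto `(w, ∞)`, give `C μ_{k+1}((w, ∞))`. The second case is
the induction hypothesis integrated against `ρ`. Since `μ_k` has no atoms, both pieces are
bounded by multiples of `μ_k((min{0,x}, ∞))`.
-/

instance sFinite_convPow (ν : Measure ℝ) [SFinite ν] (k : ℕ) : SFinite (convPow ν k) := by
  induction k with
  | zero => exact inferInstanceAs (SFinite (Measure.dirac 0))
  | succ k _ => exact inferInstanceAs (SFinite (convPow ν k ∗ ν))

theorem lintegral_withDensity_le_mul {α : Type*} [MeasurableSpace α] (μ : Measure α)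
    {u g : α → ℝ≥0∞} {C : ℝ≥0∞} (hu : Measurable u) (hbound : ∀ x, u x ≤ C) (hg : Measurable g) :
    ∫⁻ x, g x ∂μ.withDensity u ≤ C * ∫⁻ x, g x ∂μ :=
  calc ∫⁻ x, g x ∂μ.withDensity u ≤ ∫⁻ x, (u * g) x ∂μ :=
        lintegral_withDensity_le_lintegral_mul μ hu g
    _ ≤ ∫⁻ x, C * g x ∂μ := lintegral_mono fun x => mul_le_mul_left (hbound x) _
    _ = C * ∫⁻ x, g x ∂μ := lintegral_const_mul C hg

theorem conv_apply_Ioi (μ ν : Measure ℝ) [SFinite ν] (w : ℝ) :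
    (μ ∗ ν) (Ioi w) = ∫⁻ y, ν (Ioi (w - y)) ∂μ := by
  rw [Measure.conv, Measure.map_apply measurable_add measurableSet_Ioi,
    Measure.prod_apply (measurable_add measurableSet_Ioi)]
  simp_rw [← preimage_const_add_Ioi]
  rfl

theorem lintegral_indicator_Iio_add_le (μ : Measure ℝ) (g : ℝ → ℝ≥0∞) (y : ℝ) :
    ∫⁻ t, (Iio 0).indicator g (y + t) ∂μ
      ≤ (Iio 0).indicator (fun y => ∫⁻ t, g (y + t) ∂μ) y + ∫⁻ t in Iio 0, g (y + t) ∂μ := by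
  rcases lt_or_ge y 0 with hy | hy
  · rw [indicator_of_mem (show y ∈ Iio 0 from hy)]
    exact le_add_right (lintegral_mono fun t => indicator_le_self _ _ _)
  · rw [indicator_of_notMem (show y ∉ Iio 0 from not_lt.2 hy), zero_add,
      ← lintegral_indicator measurableSet_Iio]
    refine lintegral_mono fun t => ?_
    simp only [indicator_apply, mem_Iio]
    split_ifs <;> first | exact le_rfl | exact zero_le | exfalso; linarith

section

variable {μ : Measure ℝ} {f u : ℝ → ℝ≥0∞} {C : ℝ≥0∞}

theorem measurable_lintegral_comp_sub [SFinite μ] (hf : Measurable f) :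
    Measurable fun x => ∫⁻ t, f (x - t) ∂μ :=
  (hf.comp (measurable_fst.sub measurable_snd)).lintegral_prod_right'

theorem conv_withDensity_eq_withDensity [SFinite μ] (hf : Measurable f) :
    μ ∗ volume.withDensity f = volume.withDensity fun x => ∫⁻ t, f (x - t) ∂μ := by
  refine Measure.ext_of_lintegral _ fun φ hφ => ?_
  rw [Measure.lintegral_conv hφ, lintegral_withDensity_eq_lintegral_mul _
    (measurable_lintegral_comp_sub hf) hφ]
  calc ∫⁻ t, ∫⁻ y, φ (t + y) ∂volume.withDensity f ∂μ
      = ∫⁻ t, (∫⁻ z, f (z - t) * φ z) ∂μ := by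
        refine lintegral_congr fun t => ?_
        rw [lintegral_withDensity_eq_lintegral_mul _ hf (by fun_prop : Measurable (φ <| t + ·)),
          ← lintegral_add_left_eq_self (fun z => f (z - t) * φ z) t]
        simp
    _ = ∫⁻ z, ∫⁻ t, f (z - t) * φ z ∂μ :=
        lintegral_lintegral_swap ((hf.comp (measurable_snd.sub measurable_fst)).mul
          (hφ.comp measurable_snd)).aemeasurable
    _ = ∫⁻ z, ((fun x => ∫⁻ t, f (x - t) ∂μ) * φ) z := by
        refine lintegral_congr fun z => ?_
        exact lintegral_mul_const _ (hf.comp (measurable_const_sub z))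

theorem setLIntegral_Iio_comp_sub (hf : Measurable f) (w : ℝ) :
    ∫⁻ t in Iio 0, f (w - t) = volume.withDensity f (Ioi w) := by
  rw [withDensity_apply _ measurableSet_Ioi, ← sub_self w, ← preimage_const_sub_Ioi,
    (Measure.measurePreserving_sub_left volume w).setLIntegral_comp_preimage measurableSet_Ioi hf]

theorem lintegral_Iio_conv_withDensity_le [SFinite μ] (hu : Measurable u)
    (hbound : ∀ x, u x ≤ C) {K : ℝ≥0∞}
    (hμ : ∀ w, ∫⁻ t in Iio 0, u (w - t) ∂μ ≤ K * μ (Ioi w)) (w : ℝ) :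
    ∫⁻ t in Iio 0, u (w - t) ∂(μ ∗ volume.withDensity u)
      ≤ (K + C) * (μ ∗ volume.withDensity u) (Ioi w) := by
  set ρ := volume.withDensity u
  have hG : Measurable fun x => ∫⁻ t, u (x - t) ∂μ := measurable_lintegral_comp_sub hu
  have hB : Measurable fun y => ∫⁻ t in Iio 0, u (w - y - t) ∂μ :=
    (measurable_lintegral_comp_sub hu).comp (measurable_const_sub w)
  have hmono : Monotone fun y => μ (Ioi (w - y)) :=
    fun y y' h => measure_mono (Ioi_subset_Ioi (by linarith))
  rw [← lintegral_indicator measurableSet_Iio, Measure.conv_comm,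
    Measure.lintegral_conv (f := (Iio 0).indicator fun s => u (w - s))
      ((hu.comp (measurable_const_sub w)).indicator measurableSet_Iio)]
  calc ∫⁻ y, ∫⁻ t, (Iio 0).indicator (fun s => u (w - s)) (y + t) ∂μ ∂ρ
      ≤ ∫⁻ y, (Iio 0).indicator (fun y => ∫⁻ t, u (w - y - t) ∂μ) y ∂ρ
          + ∫⁻ y, ∫⁻ t in Iio 0, u (w - y - t) ∂μ ∂ρ := by
        rw [← lintegral_add_right _ hB]
        refine lintegral_mono fun y => ?_
        simpa only [sub_sub] using lintegral_indicator_Iio_add_le μ (fun s => u (w - s)) y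
    _ ≤ C * (∫⁻ y in Iio 0, ∫⁻ t, u (w - y - t) ∂μ) + ∫⁻ y, K * μ (Ioi (w - y)) ∂ρ := by
        gcongr ?_ + ?_
        · rw [← lintegral_indicator measurableSet_Iio]
          exact lintegral_withDensity_le_mul _ hu hbound
            ((hG.comp (measurable_const_sub w)).indicator measurableSet_Iio)
        · exact lintegral_mono fun y => hμ (w - y)
    _ = (K + C) * (ρ ∗ μ) (Ioi w) := by
        rw [setLIntegral_Iio_comp_sub hG, ← conv_withDensity_eq_withDensity hu,
          lintegral_const_mul K hmono.measurable, ← conv_apply_Ioi, Measure.conv_comm μ ρ]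
        ring

theorem lintegral_Iio_convPow_le (hu : Measurable u) (hbound : ∀ x, u x ≤ C) (j : ℕ) (w : ℝ) :
    ∫⁻ t in Iio 0, u (w - t) ∂convPow (volume.withDensity u) j
      ≤ j * C * convPow (volume.withDensity u) j (Ioi w) := by
  induction j generalizing w with
  | zero => simp [convPow, setLIntegral_dirac]
  | succ j ih =>
    calc _ ≤ (j * C + C) * convPow (volume.withDensity u) (j + 1) (Ioi w) :=
          lintegral_Iio_conv_withDensity_le hu hbound ih w
      _ = _ := by push_cast; ring

theorem iterDens_eq_lintegral_convPow (hu : Measurable u) (k : ℕ) :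
    iterDens u k = fun x => ∫⁻ t, u (x - t) ∂convPow (volume.withDensity u) k := by
  induction k with
  | zero => funext x; simp [iterDens, convPow]
  | succ k ih =>
    funext x
    rw [convPow, conv_withDensity_eq_withDensity hu, lintegral_withDensity_eq_lintegral_mul _
      (measurable_lintegral_comp_sub hu) (by fun_prop : Measurable (u <| x - ·)), iterDens, ih,
      ← lintegral_sub_left_eq_self _ x]
    simp [mul_comm]

theorem convPow_succ_eq_withDensity (hu : Measurable u) (k : ℕ) :
    convPow (volume.withDensity u) (k + 1) = volume.withDensity (iterDens u k) := by
  rw [convPow, conv_withDensity_eq_withDensity hu, iterDens_eq_lintegral_convPow hu]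

end

theorem iterDens_bound_general (ν : Measure ℝ) (u : ℝ → ℝ≥0∞) (hu : Measurable u)
    (hν : ν = MeasureTheory.volume.withDensity u)
    (C : ℝ≥0∞) (hbound : ∀ x : ℝ, u x ≤ C) :
    (∀ k : ℕ, convPow ν (k + 1) = MeasureTheory.volume.withDensity (iterDens u k)) ∧
    (∀ x : ℝ, iterDens u 0 x ≤ C) ∧
    (∀ k : ℕ, ∀ x : ℝ, iterDens u (k + 1) x ≤
      ((k + 2 : ℕ) : ℝ≥0∞) * C * convPow ν (k + 1) (Set.Ioi (min 0 x))) := by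
  subst hν
  refine ⟨convPow_succ_eq_withDensity hu, hbound, fun k x => ?_⟩
  set μ := convPow (volume.withDensity u) (k + 1)
  set m := min 0 x
  have hIci : μ (Ici m) = μ (Ioi m) := by
    refine measure_congr (Ioi_ae_eq_Ici' ?_).symm
    rw [show μ = _ from convPow_succ_eq_withDensity hu k]
    exact withDensity_absolutelyContinuous _ _ Real.volume_singleton
  calc iterDens u (k + 1) x = ∫⁻ t, u (x - t) ∂μ := by rw [iterDens_eq_lintegral_convPow hu]
    _ = ∫⁻ t in Iio 0, u (x - t) ∂μ + ∫⁻ t in Ici 0, u (x - t) ∂μ := by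
        rw [← compl_Iio, lintegral_add_compl _ measurableSet_Iio]
    _ ≤ (k + 1 : ℕ) * C * μ (Ioi x) + C * μ (Ici 0) := by
        gcongr ?_ + ?_
        · exact lintegral_Iio_convPow_le hu hbound (k + 1) x
        · exact (setLIntegral_mono measurable_const fun t _ => hbound _).trans
            (setLIntegral_const _ C).le
    _ ≤ (k + 1 : ℕ) * C * μ (Ioi m) + C * μ (Ioi m) := by
        gcongr ?_ + C * ?_
        · gcongr
          exact min_le_right 0 x
        · rw [← hIci]
          exact measure_mono (Ici_subset_Ici.2 (min_le_left 0 x))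
    _ = ((k + 2 : ℕ) : ℝ≥0∞) * C * μ (Ioi m) := by push_cast; ring

/-- If `ν` has density `u ≤ C < ∞` w.r.t. Lebesgue measure, then for every `k ≥ 1` the
function `u_k` is a density of `ν^{*k}` and `u_k(x) ≤ k C ν^{*(k-1)}((min{0,x}, ∞))`,
where for `k = 1` the right-hand side is interpreted as `C`.
(Here `iterDens u k = u_{k+1}`.) -/
theorem iterDens_bound (ν : Measure ℝ) (u : ℝ → ℝ≥0∞) (hu : Measurable u)
    (hν : ν = MeasureTheory.volume.withDensity u)
    (C : ℝ≥0∞) (hC : C ≠ ⊤) (hbound : ∀ x : ℝ, u x ≤ C) :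
    (∀ k : ℕ, convPow ν (k + 1) = MeasureTheory.volume.withDensity (iterDens u k)) ∧
    (∀ x : ℝ, iterDens u 0 x ≤ C) ∧
    (∀ k : ℕ, ∀ x : ℝ, iterDens u (k + 1) x ≤
      ((k + 2 : ℕ) : ℝ≥0∞) * C * convPow ν (k + 1) (Set.Ioi (min 0 x))) :=
  iterDens_bound_general ν u hu hν C hbound
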